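/- arXiv:2506.11646 — 7 statements merged into one kernel-verified Lean document; each statement's English description precedes it below -/
import Mathlib

section
/- On M = ⊕ᵏT*Q × ℝᵏ with η^α = ds^α − p^α_a dyᵃ and Hamiltonian function H, let Ω^α = −H dη^α + dH ∧ η^α. If a k-vector field X = (X_α) satisfies ι_{X_α}Ω^α = 0 and ι_{X_α}η^α = −H at a point where H ≠ 0, then X satisfies the Hamilton–de Donder–Weyl equations ι_{X_α} dη^α = dH − (L_{R_α}H) η^α and ι_{X_α}η^α = −H at that point. -/
/-- The canonical model `(⊕ᵏ T*Q) × ℝᵏ` in coordinates `(y, p, s)`. -/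
abbrev KModel (n k : ℕ) := (Fin n → ℝ) × (Fin k → Fin n → ℝ) × (Fin k → ℝ)

/-- `η^α = ds^α − p^α_a dy^a` at the point `m` on the tangent vector `v`. -/
def ketaP (n k : ℕ) (α : Fin k) (m v : KModel n k) : ℝ :=
  v.2.2 α - ∑ a, m.2.1 α a * v.1 a

/-- `dη^α = dy^a ∧ dp^α_a` on tangent vectors `u, v`. -/
def kdeta (n k : ℕ) (α : Fin k) (u v : KModel n k) : ℝ :=
  ∑ a, (u.1 a * v.2.1 α a - v.1 a * u.2.1 α a)

/-- coordinate tangent direction `∂/∂s^α`. -/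
def sdir (n k : ℕ) (α : Fin k) : KModel n k :=
  (0, 0, Pi.single α (1:ℝ))

/-- The 2-form `Ω^α = −H dη^α + dH ∧ η^α` at the point `m`. -/
noncomputable def OmegaH (n k : ℕ) (H : KModel n k → ℝ) (α : Fin k)
    (m u v : KModel n k) : ℝ :=
  -(H m) * kdeta n k α u v
    + fderiv ℝ H m u * ketaP n k α m v - fderiv ℝ H m v * ketaP n k α m u

/-!
The Reeb fields `R_β` satisfy `ι_{R_β} dη^α = 0` and `η^α(R_β) = δ^α_β`, so evaluating
`ι_{X_α}Ω^α = 0` on `R_β` and using `ι_{X_α}η^α = −H` gives `dH(X_β) = −H · R_β(H)`.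
Substituting this back, `ι_{X_α}Ω^α = −H (ι_{X_α}dη^α − dH + R_α(H) η^α)`, and `H ≠ 0`
lets one cancel the factor `−H`.
-/

section KContact

variable {n k : ℕ}

@[simp]
lemma kdeta_sdir_right (α β : Fin k) (u : KModel n k) : kdeta n k α u (sdir n k β) = 0 := by
  simp [kdeta, sdir]

@[simp]
lemma ketaP_sdir (α β : Fin k) (m : KModel n k) :
    ketaP n k α m (sdir n k β) = if α = β then 1 else 0 := by
  simp [ketaP, sdir, Pi.single_apply]

lemma sum_OmegaH (H : KModel n k → ℝ) (m v : KModel n k) (X : Fin k → KModel n k) :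
    ∑ α, OmegaH n k H α m (X α) v =
      -(H m) * ∑ α, kdeta n k α (X α) v + ∑ α, fderiv ℝ H m (X α) * ketaP n k α m v
        - fderiv ℝ H m v * ∑ α, ketaP n k α m (X α) := by
  simp only [OmegaH, Finset.sum_sub_distrib, Finset.sum_add_distrib, Finset.mul_sum]

lemma fderiv_apply_eq_neg_mul_fderiv_sdir (H : KModel n k → ℝ) (m : KModel n k)
    (X : Fin k → KModel n k) (β : Fin k)
    (hΩ : ∑ α, OmegaH n k H α m (X α) (sdir n k β) = 0)
    (hη : ∑ α, ketaP n k α m (X α) = -H m) :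
    fderiv ℝ H m (X β) = -(H m) * fderiv ℝ H m (sdir n k β) := by
  simpa [sum_OmegaH, hη, add_eq_zero_iff_eq_neg, mul_comm] using hΩ

end KContact

theorem stmt_4_general (n k : ℕ) (H : KModel n k → ℝ) (m : KModel n k)
    (hm : H m ≠ 0)
    (X : Fin k → KModel n k)
    (h1 : ∀ v : KModel n k, (∑ α, OmegaH n k H α m (X α) v) = 0)
    (h2 : (∑ α, ketaP n k α m (X α)) = -H m) :
    (∀ v : KModel n k,
      (∑ α, kdeta n k α (X α) v) =
        fderiv ℝ H m v - ∑ α, fderiv ℝ H m (sdir n k α) * ketaP n k α m v) ∧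
    (∑ α, ketaP n k α m (X α)) = -H m := by
  refine ⟨fun v => ?_, h2⟩
  have hX : ∀ β, fderiv ℝ H m (X β) = -(H m) * fderiv ℝ H m (sdir n k β) :=
    fun β => fderiv_apply_eq_neg_mul_fderiv_sdir H m X β (h1 _) h2
  have hv := h1 v
  simp only [sum_OmegaH, hX, h2, mul_assoc, ← Finset.mul_sum] at hv
  apply mul_left_cancel₀ (neg_ne_zero.mpr hm)
  linear_combination hv

/-- at a point where `H ≠ 0`, a solution of the Reeb-free equations
`ι_{X_α}Ω^α = 0`, `ι_{X_α}η^α = −H` solves the Hamilton–de Donder–Weyl equations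
`ι_{X_α}dη^α = dH − (L_{R_α}H)η^α`, `ι_{X_α}η^α = −H` (with `R_α = ∂/∂s^α`). -/
theorem stmt_4 (n k : ℕ) (H : KModel n k → ℝ) (m : KModel n k)
    (hH : DifferentiableAt ℝ H m) (hm : H m ≠ 0)
    (X : Fin k → KModel n k)
    (h1 : ∀ v : KModel n k, (∑ α, OmegaH n k H α m (X α) v) = 0)
    (h2 : (∑ α, ketaP n k α m (X α)) = -H m) :
    (∀ v : KModel n k,
      (∑ α, kdeta n k α (X α) v) =
        fderiv ℝ H m v - ∑ α, fderiv ℝ H m (sdir n k α) * ketaP n k α m v) ∧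
    (∑ α, ketaP n k α m (X α)) = -H m :=
  stmt_4_general n k H m hm X h1 h2
end

section
/- Let L : ℝⁿ × ℝ^{nk} × ℝᵏ → ℝ be a regular Lagrangian (Hessian W^{αβ}_{ab} = ∂²L/∂yᵃ_α ∂yᵇ_β invertible everywhere, with inverse W_{ab}^{αβ} satisfying W^{ba}_{γβ} ∂²L/∂s^α ∂y^b_γ-contractions as below). Then the vector fields (R_L)_α = ∂/∂s^α − W^{ba}_{γβ} (∂²L/∂s^α ∂yᵇ_γ) ∂/∂yᵃ_β satisfy ι_{(R_L)_α} η^β_L = δ^β_α and ι_{(R_L)_α} dη^β_L = 0, where η^β_L = ds^β − (∂L/∂yᵇ_β) dyᵇ. -/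
abbrev VModel (n k : ℕ) := (Fin n → ℝ) × (Fin k → Fin n → ℝ) × (Fin k → ℝ)

def vdir (n k : ℕ) (α : Fin k) (a : Fin n) : VModel n k :=
  (0, Pi.single α (Pi.single a (1:ℝ)), 0)

noncomputable def pL (n k : ℕ) (L : VModel n k → ℝ) (α : Fin k) (a : Fin n)
    (m : VModel n k) : ℝ :=
  fderiv ℝ L m (vdir n k α a)

noncomputable def HessL (n k : ℕ) (L : VModel n k → ℝ) (m : VModel n k) :
    Matrix (Fin k × Fin n) (Fin k × Fin n) ℝ :=
  fun q r => fderiv ℝ (fun m' => pL n k L r.1 r.2 m') m (vdir n k q.1 q.2)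

noncomputable def ketaL (n k : ℕ) (L : VModel n k → ℝ) (β : Fin k)
    (m u : VModel n k) : ℝ :=
  u.2.2 β - ∑ b, pL n k L β b m * u.1 b

noncomputable def kdetaL (n k : ℕ) (L : VModel n k → ℝ) (β : Fin k)
    (m u v : VModel n k) : ℝ :=
  ∑ b, (u.1 b * fderiv ℝ (fun m' => pL n k L β b m') m v
        - v.1 b * fderiv ℝ (fun m' => pL n k L β b m') m u)

noncomputable def ReebL (n k : ℕ) (L : VModel n k → ℝ)
    (W : VModel n k → Matrix (Fin k × Fin n) (Fin k × Fin n) ℝ)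
    (α : Fin k) (m : VModel n k) : VModel n k :=
  (0,
   fun β a => -(∑ q : Fin k × Fin n,
     W m (β, a) q *
       fderiv ℝ (fun m' => pL n k L q.1 q.2 m') m ((0, 0, Pi.single α (1:ℝ)) : VModel n k)),
   Pi.single α (1:ℝ))

section Aux
variable {n k : ℕ} {L : VModel n k → ℝ}

lemma key (hL : ContDiff ℝ (⊤ : ℕ∞) L) (β : Fin k) (b : Fin n) (m u : VModel n k) :
    fderiv ℝ (fun m' => pL n k L β b m') m u
      = fderiv ℝ (fderiv ℝ L) m u (vdir n k β b) := by
  have hc : DifferentiableAt ℝ (fderiv ℝ L) m :=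
    ((hL.fderiv_right (m := (⊤:ℕ∞)) le_rfl).differentiable
      (by simp)) m
  have h : (fun m' => pL n k L β b m')
      = fun m' => (fderiv ℝ L m') (vdir n k β b) := rfl
  rw [h, fderiv_clm_apply hc (differentiableAt_const _)]
  simp

lemma hess_symm (hL : ContDiff ℝ (⊤ : ℕ∞) L) (m v w : VModel n k) :
    fderiv ℝ (fderiv ℝ L) m v w = fderiv ℝ (fderiv ℝ L) m w v := by
  have hf : ∀ y, HasFDerivAt L (fderiv ℝ L y) y := fun y =>
    ((hL.differentiable (by simp)) y).hasFDerivAt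
  have hx : HasFDerivAt (fderiv ℝ L) (fderiv ℝ (fderiv ℝ L) m) m :=
    (((hL.fderiv_right (m := (⊤:ℕ∞)) le_rfl).differentiable
      (by simp)) m).hasFDerivAt
  exact second_derivative_symmetric hf hx v w

lemma pi_decomp (X : Fin k → Fin n → ℝ) :
    X = ∑ p : Fin k × Fin n, X p.1 p.2 • (Pi.single p.1 (Pi.single p.2 (1:ℝ)) : Fin k → Fin n → ℝ) := by
  funext γ a
  simp only [Finset.sum_apply, Pi.smul_apply, Pi.single_apply, smul_eq_mul,
    Fintype.sum_prod_type, mul_ite, mul_one, mul_zero]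
  simp [apply_ite (fun f : Fin n → ℝ => f a), Pi.single_apply, Finset.sum_ite_eq, eq_comm]

lemma sum_smul_vdir (c : Fin k × Fin n → ℝ) :
    ∑ p : Fin k × Fin n, c p • vdir n k p.1 p.2
      = ((0, ∑ p : Fin k × Fin n, c p • (Pi.single p.1 (Pi.single p.2 (1:ℝ)) : Fin k → Fin n → ℝ), 0)
          : VModel n k) := by
  unfold vdir
  refine Prod.ext ?_ (Prod.ext ?_ ?_) <;>
    simp [Prod.fst_sum, Prod.snd_sum, Prod.smul_mk]

lemma reeb_decomp (W : VModel n k → Matrix (Fin k × Fin n) (Fin k × Fin n) ℝ)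
    (α : Fin k) (m : VModel n k) :
    ReebL n k L W α m
      = ((0, 0, Pi.single α (1:ℝ)) : VModel n k)
        + ∑ p : Fin k × Fin n,
            (-(∑ q : Fin k × Fin n, W m p q *
              fderiv ℝ (fun m' => pL n k L q.1 q.2 m') m
                ((0, 0, Pi.single α (1:ℝ)) : VModel n k))) • vdir n k p.1 p.2 := by
  set S : Fin k × Fin n → ℝ := fun q =>
    fderiv ℝ (fun m' => pL n k L q.1 q.2 m') m
      ((0, 0, Pi.single α (1:ℝ)) : VModel n k) with hS
  set c : Fin k × Fin n → ℝ := fun p => -(∑ q : Fin k × Fin n, W m p q * S q) with hc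
  have h1 : ReebL n k L W α m
      = ((0, fun γ a => c (γ, a), Pi.single α (1:ℝ)) : VModel n k) := rfl
  have h2 : (fun γ a => c (γ, a))
      = ∑ p : Fin k × Fin n, c p • (Pi.single p.1 (Pi.single p.2 (1:ℝ)) : Fin k → Fin n → ℝ) := by
    have := pi_decomp (fun γ a => c (γ, a))
    simpa using this
  rw [h1, sum_smul_vdir, h2, Prod.mk_add_mk, Prod.mk_add_mk]
  simp [hc, neg_smul, Finset.sum_neg_distrib]
  rfl

lemma D_reeb (hL : ContDiff ℝ (⊤ : ℕ∞) L)
    (W : VModel n k → Matrix (Fin k × Fin n) (Fin k × Fin n) ℝ)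
    (hW' : ∀ m, HessL n k L m * W m = 1)
    (α β : Fin k) (b : Fin n) (m : VModel n k) :
    fderiv ℝ (fun m' => pL n k L β b m') m (ReebL n k L W α m) = 0 := by
  set e : VModel n k := ((0, 0, Pi.single α (1:ℝ)) : VModel n k) with he
  set S : Fin k × Fin n → ℝ :=
    fun q => fderiv ℝ (fun m' => pL n k L q.1 q.2 m') m e with hS
  rw [key hL, reeb_decomp, map_add, map_sum]
  simp only [map_smul, ContinuousLinearMap.add_apply, ContinuousLinearMap.coe_sum',
    Finset.sum_apply, ContinuousLinearMap.smul_apply, smul_eq_mul]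
  have h1 : fderiv ℝ (fderiv ℝ L) m e (vdir n k β b) = S (β, b) :=
    (key hL β b m e).symm
  have h2 : ∀ p : Fin k × Fin n,
      fderiv ℝ (fderiv ℝ L) m (vdir n k p.1 p.2) (vdir n k β b)
        = HessL n k L m (β, b) p := by
    intro p
    rw [hess_symm hL]
    exact (key hL p.1 p.2 m (vdir n k (β, b).1 (β, b).2)).symm
  rw [h1]
  have h3 : ∑ p : Fin k × Fin n,
      (-(∑ q : Fin k × Fin n, W m p q * S q)) *
        fderiv ℝ (fderiv ℝ L) m (vdir n k p.1 p.2) (vdir n k β b)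
      = -(∑ q : Fin k × Fin n,
          (∑ p : Fin k × Fin n, HessL n k L m (β, b) p * W m p q) * S q) := by
    simp only [h2, neg_mul, Finset.sum_neg_distrib, Finset.sum_mul]
    congr 1
    rw [Finset.sum_comm]
    apply Finset.sum_congr rfl
    intro p _
    apply Finset.sum_congr rfl
    intro q _
    ring
  rw [h3]
  have h4 : ∀ q : Fin k × Fin n,
      ∑ p : Fin k × Fin n, HessL n k L m (β, b) p * W m p q
        = if (β, b) = q then 1 else 0 := by
    intro q
    have := congrFun (congrFun (hW' m) (β, b)) q
    rwa [Matrix.mul_apply, Matrix.one_apply] at this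
  simp only [h4, ite_mul, one_mul, zero_mul, Finset.sum_ite_eq, Finset.mem_univ, if_true]
  ring

end Aux

/-- for a regular Lagrangian `L` with inverse Hessian `W`, the vector
fields `(R_L)_α` satisfy `ι_{(R_L)_α} η^β_L = δ^β_α` and `ι_{(R_L)_α} dη^β_L = 0`. -/
theorem stmt_6 (n k : ℕ) (L : VModel n k → ℝ) (hL : ContDiff ℝ (⊤ : ℕ∞) L)
    (W : VModel n k → Matrix (Fin k × Fin n) (Fin k × Fin n) ℝ)
    (hW : ∀ m, W m * HessL n k L m = 1)
    (hW' : ∀ m, HessL n k L m * W m = 1) :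
    ∀ (α β : Fin k) (m : VModel n k),
      ketaL n k L β m (ReebL n k L W α m) = (if β = α then 1 else 0) ∧
      ∀ v : VModel n k, kdetaL n k L β m (ReebL n k L W α m) v = 0 := by
  intro α β m
  constructor
  · simp [ketaL, ReebL, Pi.single_apply]
  · intro v
    unfold kdetaL
    apply Finset.sum_eq_zero
    intro b _
    have h0 : (ReebL n k L W α m).1 = 0 := rfl
    rw [D_reeb hL W hW' α β b m, h0]
    simp
end

section
/- Let L : ℝⁿ × ℝ^{nk} × ℝᵏ → ℝ be a regular Lagrangian and suppose X = (X_α) is a k-vector field on P = ℝⁿ × ℝ^{nk} × ℝᵏ (coordinates (yᵃ, yᵃ_α, s^α)) with components X_α = Xᵃ_α ∂/∂yᵃ + Xᵃ_{αβ} ∂/∂yᵃ_β + X^β_α ∂/∂s^β solving the k-contact Lagrangian equations ι_{X_α} dη^α_L = dE_L − (L_{(R_L)_α}E_L) η^α_L and ι_{X_α} η^α_L = −E_L. Then Xᵃ_α = yᵃ_α for all a, α (i.e., X is semi-holonomic), and X^α_α = L (sum over α). -/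
/-- The Lagrangian energy `E_L = yᵃ_α ∂L/∂yᵃ_α − L`. -/
noncomputable def EnergyL (n k : ℕ) (L : VModel n k → ℝ) (m : VModel n k) : ℝ :=
  (∑ α, ∑ a, m.2.1 α a * pL n k L α a m) - L m

/-- The velocity coordinate function as a continuous linear map. -/
noncomputable def cCLM (n k : ℕ) (α : Fin k) (a : Fin n) : VModel n k →L[ℝ] ℝ :=
  (ContinuousLinearMap.proj a).comp ((ContinuousLinearMap.proj α).comp
    ((ContinuousLinearMap.fst ℝ (Fin k → Fin n → ℝ) (Fin k → ℝ)).comp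
      (ContinuousLinearMap.snd ℝ (Fin n → ℝ) ((Fin k → Fin n → ℝ) × (Fin k → ℝ)))))

lemma cCLM_apply (n k : ℕ) (α : Fin k) (a : Fin n) (u : VModel n k) :
    cCLM n k α a u = u.2.1 α a := rfl

lemma pL_contDiff (n k : ℕ) (L : VModel n k → ℝ) (hL : ContDiff ℝ (⊤ : ℕ∞) L)
    (α : Fin k) (a : Fin n) : ContDiff ℝ (⊤ : ℕ∞) (pL n k L α a) :=
  (hL.fderiv_right (by exact_mod_cast le_top)).clm_apply contDiff_const

lemma energy_hasFDerivAt (n k : ℕ) (L : VModel n k → ℝ) (hL : ContDiff ℝ (⊤ : ℕ∞) L)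
    (m : VModel n k) :
    HasFDerivAt (EnergyL n k L)
      ((∑ α, ∑ a, (m.2.1 α a • fderiv ℝ (pL n k L α a) m + pL n k L α a m • cCLM n k α a))
        - fderiv ℝ L m) m := by
  have hp : ∀ (α : Fin k) (a : Fin n),
      HasFDerivAt (pL n k L α a) (fderiv ℝ (pL n k L α a) m) m :=
    fun α a => ((pL_contDiff n k L hL α a).differentiable (by simp) m).hasFDerivAt
  have hterm : ∀ (α : Fin k) (a : Fin n),
      HasFDerivAt (fun m' : VModel n k => m'.2.1 α a * pL n k L α a m')
        (m.2.1 α a • fderiv ℝ (pL n k L α a) m + pL n k L α a m • cCLM n k α a) m := by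
    intro α a
    have := ((cCLM n k α a).hasFDerivAt (x := m)).mul (hp α a)
    exact this
  have hsum := HasFDerivAt.fun_sum (x := m)
    (A := fun α (m' : VModel n k) => ∑ a, m'.2.1 α a * pL n k L α a m')
    (A' := fun α => ∑ a, (m.2.1 α a • fderiv ℝ (pL n k L α a) m + pL n k L α a m • cCLM n k α a))
    (u := Finset.univ)
    (fun α _ => HasFDerivAt.fun_sum (fun a _ => hterm α a))
  exact hsum.fun_sub ((hL.differentiable (by simp) m).hasFDerivAt)

lemma energy_fderiv_vdir (n k : ℕ) (L : VModel n k → ℝ) (hL : ContDiff ℝ (⊤ : ℕ∞) L)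
    (m : VModel n k) (β : Fin k) (c : Fin n) :
    fderiv ℝ (EnergyL n k L) m (vdir n k β c)
      = ∑ α, ∑ a, m.2.1 α a * HessL n k L m (β, c) (α, a) := by
  rw [(energy_hasFDerivAt n k L hL m).fderiv]
  have h1 : fderiv ℝ L m (vdir n k β c) = pL n k L β c m := rfl
  have h2 : ∀ (α : Fin k) (a : Fin n),
      cCLM n k α a (vdir n k β c) = (Pi.single β (Pi.single c (1:ℝ)) : Fin k → Fin n → ℝ) α a :=
    fun _ _ => rfl
  have h3 : ∀ (α : Fin k) (a : Fin n),
      fderiv ℝ (pL n k L α a) m (vdir n k β c) = HessL n k L m (β, c) (α, a) := fun _ _ => rfl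
  have h4 : (∑ α, ∑ a, pL n k L α a m * (Pi.single β (Pi.single c (1:ℝ)) : Fin k → Fin n → ℝ) α a)
      = pL n k L β c m := by
    rw [Finset.sum_eq_single β]
    · rw [Finset.sum_eq_single c]
      · simp
      · intro b _ hb; simp [Pi.single_apply, hb]
      · simp
    · intro α _ hα; simp [Pi.single_apply, hα]
    · simp
  simp only [ContinuousLinearMap.sub_apply, ContinuousLinearMap.sum_apply,
    ContinuousLinearMap.add_apply, ContinuousLinearMap.smul_apply, smul_eq_mul, h1, h2, h3,
    Finset.sum_add_distrib]
  rw [h4]; ring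

/-- for a regular Lagrangian, any `k`-vector field solving the
`k`-contact Lagrangian equations is semi-holonomic (`Xᵃ_α = yᵃ_α`) and its
`s`-components satisfy `X^α_α = L`. -/
theorem stmt_7 (n k : ℕ) (L : VModel n k → ℝ) (hL : ContDiff ℝ (⊤ : ℕ∞) L)
    (W : VModel n k → Matrix (Fin k × Fin n) (Fin k × Fin n) ℝ)
    (hW : ∀ m, W m * HessL n k L m = 1)
    (hW' : ∀ m, HessL n k L m * W m = 1)
    (X : Fin k → VModel n k → VModel n k)
    (heq1 : ∀ (m : VModel n k) (v : VModel n k),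
      (∑ α, kdetaL n k L α m (X α m) v) =
        fderiv ℝ (EnergyL n k L) m v
          - ∑ α, fderiv ℝ (EnergyL n k L) m (ReebL n k L W α m) * ketaL n k L α m v)
    (heq2 : ∀ m : VModel n k, (∑ α, ketaL n k L α m (X α m)) = -(EnergyL n k L m)) :
    ∀ m : VModel n k,
      (∀ (α : Fin k) (a : Fin n), (X α m).1 a = m.2.1 α a) ∧
      (∑ α, (X α m).2.2 α) = L m := by
  intro m
  -- the defect vector
  set d : Fin k × Fin n → ℝ := fun r => (X r.1 m).1 r.2 - m.2.1 r.1 r.2 with hd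
  have key : ∀ (β : Fin k) (c : Fin n),
      (HessL n k L m).mulVec d (β, c) = 0 := by
    intro β c
    have h := heq1 m (vdir n k β c)
    have hketa : ∀ α : Fin k, ketaL n k L α m (vdir n k β c) = 0 := by
      intro α; simp [ketaL, vdir]
    have hkd : ∀ α : Fin k, kdetaL n k L α m (X α m) (vdir n k β c)
        = ∑ b, (X α m).1 b * HessL n k L m (β, c) (α, b) := by
      intro α
      unfold kdetaL
      refine Finset.sum_congr rfl fun b _ => ?_
      have : (vdir n k β c).1 b = 0 := rfl
      rw [this]
      simp [HessL]
    rw [energy_fderiv_vdir n k L hL m β c] at h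
    simp only [hketa, mul_zero, Finset.sum_const_zero, sub_zero, hkd] at h
    have : (HessL n k L m).mulVec d (β, c)
        = ∑ r : Fin k × Fin n, HessL n k L m (β, c) r * d r := rfl
    rw [this]
    have expand : ∑ r : Fin k × Fin n, HessL n k L m (β, c) r * d r
        = (∑ α, ∑ b, (X α m).1 b * HessL n k L m (β, c) (α, b))
          - (∑ α, ∑ a, m.2.1 α a * HessL n k L m (β, c) (α, a)) := by
      rw [Fintype.sum_prod_type, ← Finset.sum_sub_distrib]
      refine Finset.sum_congr rfl fun α _ => ?_
      rw [← Finset.sum_sub_distrib]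
      refine Finset.sum_congr rfl fun b _ => ?_
      simp only [hd]; ring
    rw [expand, h, sub_self]
  have hd0 : d = 0 := by
    have hmv : (HessL n k L m).mulVec d = 0 := funext fun q => key q.1 q.2
    calc d = (1 : Matrix (Fin k × Fin n) (Fin k × Fin n) ℝ).mulVec d :=
            (Matrix.one_mulVec d).symm
      _ = (W m * HessL n k L m).mulVec d := by rw [hW m]
      _ = (W m).mulVec ((HessL n k L m).mulVec d) := (Matrix.mulVec_mulVec d _ _).symm
      _ = 0 := by rw [hmv, Matrix.mulVec_zero]
  have hX1 : ∀ (α : Fin k) (a : Fin n), (X α m).1 a = m.2.1 α a := by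
    intro α a
    have := congrFun hd0 (α, a)
    simpa [hd, sub_eq_zero] using this
  refine ⟨hX1, ?_⟩
  have h2 := heq2 m
  unfold ketaL EnergyL at h2
  have hsub : ∀ α : Fin k, ∑ b, pL n k L α b m * (X α m).1 b
      = ∑ b, m.2.1 α b * pL n k L α b m := by
    intro α
    refine Finset.sum_congr rfl fun b _ => ?_
    rw [hX1 α b]; ring
  rw [Finset.sum_sub_distrib] at h2
  rw [Finset.sum_congr rfl (fun α _ => hsub α)] at h2
  linarith
end

section
/- Let h be a smooth function on ℝᵏ × ℝⁿ × ℝ^{nk} × ℝᵏ with coordinates (x^α, yᵃ, p^α_a, s^α), and let X = (X_α) be a k-vector field with components X_α = A^β_α ∂/∂x^β + Bᵃ_α ∂/∂yᵃ + C^β_{αa} ∂/∂p^β_a + D^β_α ∂/∂s^β. Then X satisfies the k-cocontact Hamilton–de Donder–Weyl equations ι_{X_α} dη^α = dh − (∂h/∂x^α)τ^α − (∂h/∂s^α)η^α, ι_{X_α}η^α = −h, ι_{X_α}τ^β = δ^β_α (with τ^α = dx^α, η^α = ds^α − p^α_a dyᵃ) if and only if A^β_α = δ^β_α, Bᵃ_α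 = ∂h/∂p^α_a, C^α_{αa} = −(∂h/∂yᵃ + p^α_a ∂h/∂s^α), and D^α_α = p^α_a ∂h/∂p^α_a − h (summation over repeated α and a). -/
/-- The canonical `k`-cocontact model in coordinates `(x, y, p, s)`. -/
abbrev CoModel (n k : ℕ) :=
  (Fin k → ℝ) × (Fin n → ℝ) × (Fin k → Fin n → ℝ) × (Fin k → ℝ)

/-- `τ^α = dx^α`. -/
def ctau (n k : ℕ) (α : Fin k) (v : CoModel n k) : ℝ := v.1 α

/-- `η^α = ds^α − p^α_a dyᵃ` at `m` on `v`. -/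
def ceta (n k : ℕ) (α : Fin k) (m v : CoModel n k) : ℝ :=
  v.2.2.2 α - ∑ a, m.2.2.1 α a * v.2.1 a

/-- `dη^α = dyᵃ ∧ dp^α_a`. -/
def cdeta (n k : ℕ) (α : Fin k) (u v : CoModel n k) : ℝ :=
  ∑ a, (u.2.1 a * v.2.2.1 α a - v.2.1 a * u.2.2.1 α a)

/-- coordinate directions. -/
def cxdir (n k : ℕ) (α : Fin k) : CoModel n k := (Pi.single α (1:ℝ), 0, 0, 0)
def cydir (n k : ℕ) (a : Fin n) : CoModel n k := (0, Pi.single a (1:ℝ), 0, 0)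
def cpdir (n k : ℕ) (α : Fin k) (a : Fin n) : CoModel n k :=
  (0, 0, Pi.single α (Pi.single a (1:ℝ)), 0)
def csdir (n k : ℕ) (α : Fin k) : CoModel n k := (0, 0, 0, Pi.single α (1:ℝ))

/-! Expanding `dh` in the coordinate directions, its `dx^α` and `ds^α` components cancel against
the `τ^α` and `η^α` terms, so the one-form equation only compares `dp^α_a` and `dyᵃ` coefficients:
these give `B` and the trace `C^α_{αa}`. Given `B`, the equation `ι_{X_α} η^α = -h` is the trace
condition on `D`, and the `τ` equations give `A`. Only traces of `C` and `D` are constrained. -/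

namespace CoModel

variable {n k : ℕ}

theorem eq_sum_coord_smul (v : CoModel n k) :
    v = (∑ α, v.1 α • cxdir n k α) + (∑ a, v.2.1 a • cydir n k a)
      + (∑ α, ∑ a, v.2.2.1 α a • cpdir n k α a) + (∑ α, v.2.2.2 α • csdir n k α) := by
  refine Prod.ext ?_ (Prod.ext ?_ (Prod.ext ?_ ?_)) <;>
    · funext i
      try funext j
      simp [cxdir, cydir, cpdir, csdir, Prod.fst_sum, Prod.snd_sum,
        Finset.sum_apply, Pi.single_apply, mul_ite]

theorem linearMap_apply_eq_sum_coord {M : Type*} [AddCommMonoid M] [Module ℝ M]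
    (L : CoModel n k →ₗ[ℝ] M) (v : CoModel n k) :
    L v = (∑ α, v.1 α • L (cxdir n k α)) + (∑ a, v.2.1 a • L (cydir n k a))
      + (∑ α, ∑ a, v.2.2.1 α a • L (cpdir n k α a)) + (∑ α, v.2.2.2 α • L (csdir n k α)) := by
  conv_lhs => rw [eq_sum_coord_smul v]
  simp only [map_add, map_sum, map_smul]

theorem sum_cdeta_sub_eq (L : CoModel n k →L[ℝ] ℝ) (m : CoModel n k)
    (u : Fin k → CoModel n k) (v : CoModel n k) :
    (∑ α, cdeta n k α (u α) v)
        - (L v - (∑ α, L (cxdir n k α) * ctau n k α v)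
            - (∑ α, L (csdir n k α) * ceta n k α m v))
      = (∑ α, ∑ a, v.2.2.1 α a * ((u α).2.1 a - L (cpdir n k α a)))
        - ∑ a, v.2.1 a * ((∑ α, (u α).2.2.1 α a)
            + (L (cydir n k a) + ∑ α, m.2.2.1 α a * L (csdir n k α))) := by
  rw [← L.coe_coe, linearMap_apply_eq_sum_coord]
  simp only [L.coe_coe, cdeta, ceta, ctau, smul_eq_mul, mul_sub, mul_add, Finset.mul_sum,
    Finset.sum_sub_distrib, Finset.sum_add_distrib]
  have hs : ∑ α, ∑ a, L (csdir n k α) * (m.2.2.1 α a * v.2.1 a)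
      = ∑ a, ∑ α, v.2.1 a * (m.2.2.1 α a * L (csdir n k α)) := by
    rw [Finset.sum_comm]
    exact Finset.sum_congr rfl fun _ _ => Finset.sum_congr rfl fun _ _ => by ring
  rw [hs, Finset.sum_comm (f := fun (α : Fin k) (a : Fin n) => v.2.1 a * (u α).2.2.1 α a)]
  simp only [mul_comm (L _)]
  simp only [mul_comm ((u _).2.1 _)]
  ring

theorem sum_cdeta_eq_iff (L : CoModel n k →L[ℝ] ℝ) (m : CoModel n k)
    (u : Fin k → CoModel n k) :
    (∀ v : CoModel n k,
      (∑ α, cdeta n k α (u α) v) =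
        L v - (∑ α, L (cxdir n k α) * ctau n k α v)
          - (∑ α, L (csdir n k α) * ceta n k α m v)) ↔
    (∀ (α : Fin k) (a : Fin n), (u α).2.1 a = L (cpdir n k α a)) ∧
    (∀ a : Fin n,
      (∑ α, (u α).2.2.1 α a) = -(L (cydir n k a) + ∑ α, m.2.2.1 α a * L (csdir n k α))) := by
  simp only [← sub_eq_zero (b := L _ - _ - _), sum_cdeta_sub_eq]
  constructor
  · intro H
    refine ⟨fun α a => ?_, fun a => ?_⟩
    · simpa [cpdir, Pi.single_apply, ite_apply, ite_mul, sub_eq_zero] using H (cpdir n k α a)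
    · have hy := H (cydir n k a)
      simp only [cydir, Pi.zero_apply, zero_mul, Finset.sum_const_zero, Pi.single_apply, ite_mul,
        one_mul, Finset.sum_ite_eq', Finset.mem_univ, ↓reduceIte, zero_sub, neg_add_rev] at hy ⊢
      linarith
  · rintro ⟨hB, hC⟩ v
    simp [hB, hC]

theorem sum_ceta_eq_neg_iff {L : CoModel n k →L[ℝ] ℝ} {m : CoModel n k}
    {u : Fin k → CoModel n k} (hB : ∀ (α : Fin k) (a : Fin n), (u α).2.1 a = L (cpdir n k α a))
    (c : ℝ) :
    (∑ α, ceta n k α m (u α)) = -c ↔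
      (∑ α, (u α).2.2.2 α) = (∑ α, ∑ a, m.2.2.1 α a * L (cpdir n k α a)) - c := by
  simp only [ceta, hB, Finset.sum_sub_distrib]
  constructor <;> intro H <;> linarith

theorem ctau_eq_ite_iff (u : Fin k → CoModel n k) :
    (∀ α β : Fin k, ctau n k β (u α) = if β = α then 1 else 0) ↔
      ∀ α : Fin k, (u α).1 = Pi.single α (1 : ℝ) := by
  simp only [funext_iff, ctau, Pi.single_apply]

end CoModel

theorem stmt_10_general (n k : ℕ) (h : CoModel n k → ℝ)
    (X : Fin k → CoModel n k → CoModel n k) :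
    -- intrinsic HDW equations
    (∀ m : CoModel n k,
      (∀ v : CoModel n k,
        (∑ α, cdeta n k α (X α m) v) =
          fderiv ℝ h m v
            - (∑ α, fderiv ℝ h m (cxdir n k α) * ctau n k α v)
            - (∑ α, fderiv ℝ h m (csdir n k α) * ceta n k α m v)) ∧
      ((∑ α, ceta n k α m (X α m)) = -h m) ∧
      (∀ α β : Fin k, ctau n k β (X α m) = (if β = α then 1 else 0)))
    ↔
    -- coordinate conditions on the components A, B, C, D
    (∀ m : CoModel n k,
      (∀ α : Fin k, (X α m).1 = Pi.single α (1:ℝ)) ∧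
      (∀ (α : Fin k) (a : Fin n), (X α m).2.1 a = fderiv ℝ h m (cpdir n k α a)) ∧
      (∀ a : Fin n,
        (∑ α, (X α m).2.2.1 α a) =
          -(fderiv ℝ h m (cydir n k a)
            + ∑ α, m.2.2.1 α a * fderiv ℝ h m (csdir n k α))) ∧
      ((∑ α, (X α m).2.2.2 α) =
        (∑ α, ∑ a, m.2.2.1 α a * fderiv ℝ h m (cpdir n k α a)) - h m)) := by
  refine forall_congr' fun m => ?_
  rw [CoModel.sum_cdeta_eq_iff, CoModel.ctau_eq_ite_iff]
  constructor
  · rintro ⟨⟨hB, hC⟩, hη, hA⟩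
    exact ⟨hA, hB, hC, (CoModel.sum_ceta_eq_neg_iff hB _).1 hη⟩
  · rintro ⟨hA, hB, hC, hD⟩
    exact ⟨⟨hB, hC⟩, (CoModel.sum_ceta_eq_neg_iff hB _).2 hD, hA⟩

/-- coordinate characterization of the `k`-cocontact
Hamilton–de Donder–Weyl equations for a `k`-vector field. -/
theorem stmt_10 (n k : ℕ) (h : CoModel n k → ℝ) (hh : Differentiable ℝ h)
    (X : Fin k → CoModel n k → CoModel n k) :
    -- intrinsic HDW equations
    (∀ m : CoModel n k,
      (∀ v : CoModel n k,
        (∑ α, cdeta n k α (X α m) v) =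
          fderiv ℝ h m v
            - (∑ α, fderiv ℝ h m (cxdir n k α) * ctau n k α v)
            - (∑ α, fderiv ℝ h m (csdir n k α) * ceta n k α m v)) ∧
      ((∑ α, ceta n k α m (X α m)) = -h m) ∧
      (∀ α β : Fin k, ctau n k β (X α m) = (if β = α then 1 else 0)))
    ↔
    -- coordinate conditions on the components A, B, C, D
    (∀ m : CoModel n k,
      (∀ α : Fin k, (X α m).1 = Pi.single α (1:ℝ)) ∧
      (∀ (α : Fin k) (a : Fin n), (X α m).2.1 a = fderiv ℝ h m (cpdir n k α a)) ∧
      (∀ a : Fin n,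
        (∑ α, (X α m).2.2.1 α a) =
          -(fderiv ℝ h m (cydir n k a)
            + ∑ α, m.2.2.1 α a * fderiv ℝ h m (csdir n k α))) ∧
      ((∑ α, (X α m).2.2.2 α) =
        (∑ α, ∑ a, m.2.2.1 α a * fderiv ℝ h m (cpdir n k α a)) - h m)) :=
  stmt_10_general n k h X
end

section
/- Let (M, τ^α, η^α) be a k-cocontact manifold. Then the distribution D^S ∩ D^C is maximally non-integrable: if X ∈ Γ(D^S ∩ D^C) satisfies [X, Y] ∈ Γ(D^S ∩ D^C) for all Y ∈ Γ(D^S ∩ D^C), then X = 0. -/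
/-- The exterior derivative of a 1-form field `η` (a field of continuous linear
functionals), evaluated at `x` on the pair `(u, v)`. -/
noncomputable def dOne {E : Type*} [NormedAddCommGroup E] [NormedSpace ℝ E]
    (η : E → (E →L[ℝ] ℝ)) (x u v : E) : ℝ :=
  fderiv ℝ (fun y => η y v) x u - fderiv ℝ (fun y => η y u) x v

/-- The pointwise Reeb distribution `D^R_x = ⋂_α ker (dη^α)_x` of a family of
1-forms. -/
noncomputable def ReebDist {E : Type*} [NormedAddCommGroup E] [NormedSpace ℝ E]
    {k : ℕ} (η : Fin k → E → (E →L[ℝ] ℝ)) (x : E) : Set E :=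
  {v | ∀ (α : Fin k) (w : E), dOne (η α) x v w = 0}

open Module Matrix

section auxiliary
variable {E : Type*} [NormedAddCommGroup E] [NormedSpace ℝ E]

/-- Smoothness of the determinant of a smooth matrix field. -/
lemma contDiff_det' {ι : Type*} [Fintype ι] [DecidableEq ι] {A : E → Matrix ι ι ℝ}
    (hA : ∀ i j, ContDiff ℝ (⊤ : ℕ∞) fun y => A y i j) :
    ContDiff ℝ (⊤ : ℕ∞) fun y => (A y).det := by
  have h : (fun y => (A y).det)
      = fun y => ∑ σ : Equiv.Perm ι, ((Equiv.Perm.sign σ : ℤ) : ℝ) * ∏ i, A y (σ i) i := by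
    funext y
    rw [Matrix.det_apply]
    exact Finset.sum_congr rfl fun σ _ => by simp [Units.smul_def, zsmul_eq_mul]
  rw [h]
  exact ContDiff.sum fun σ _ =>
    contDiff_const.mul (contDiff_prod fun i _ => hA (σ i) i)

/-- Extension of a vector in the joint kernel of a pointwise-surjective family of
smooth 1-forms to a global smooth section of the joint kernel distribution. -/
lemma exists_section' [FiniteDimensional ℝ E] {ι : Type*} [Fintype ι] [DecidableEq ι]
    (θ : ι → E → (E →L[ℝ] ℝ)) (hθ : ∀ i, ContDiff ℝ (⊤ : ℕ∞) (θ i))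
    (hsurj : ∀ (y : E) (c : ι → ℝ), ∃ v : E, ∀ i, θ i y v = c i)
    (x v : E) (hv : ∀ i, θ i x v = 0) :
    ∃ Y : E → E, ContDiff ℝ (⊤ : ℕ∞) Y ∧ Y x = v ∧ ∀ (y : E) (i : ι), θ i y (Y y) = 0 := by
  classical
  set b := Module.finBasis ℝ E with hb
  set M : E → Matrix ι (Fin (finrank ℝ E)) ℝ := fun y => Matrix.of fun i s => θ i y (b s) with hM
  set G : E → Matrix ι ι ℝ := fun y => M y * (M y)ᵀ with hG
  have hGapp : ∀ y i j, G y i j = ∑ s, M y i s * M y j s := by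
    intro y i j; simp [hG, Matrix.mul_apply]
  have hGsym : ∀ y i j, G y i j = G y j i := by
    intro y i j; rw [hGapp, hGapp]; exact Finset.sum_congr rfl fun s _ => mul_comm _ _
  have expand : ∀ (y u : E) (L : E →L[ℝ] ℝ), L u = ∑ s, b.repr u s * L (b s) := by
    intro y u L
    conv_lhs => rw [← b.sum_repr u]
    rw [map_sum]
    exact Finset.sum_congr rfl fun s _ => by rw [ContinuousLinearMap.map_smul, smul_eq_mul]
  -- Gram determinant nonzero
  have hGdet : ∀ y, (G y).det ≠ 0 := by
    intro y hd
    obtain ⟨c, hcne, hceq⟩ := (Matrix.exists_mulVec_eq_zero_iff).mpr hd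
    have h0 : c ⬝ᵥ (G y).mulVec c = 0 := by rw [hceq]; simp
    have key : c ⬝ᵥ (G y).mulVec c = (c ᵥ* M y) ⬝ᵥ (c ᵥ* M y) := by
      rw [hG, ← Matrix.mulVec_mulVec, Matrix.dotProduct_mulVec, Matrix.mulVec_transpose]
    have hw : ∀ s, (c ᵥ* M y) s = 0 := by
      have h0' := key ▸ h0
      intro s
      have hnn : ∀ s ∈ Finset.univ, (0:ℝ) ≤ (c ᵥ* M y) s * (c ᵥ* M y) s :=
        fun s _ => mul_self_nonneg _
      exact mul_self_eq_zero.mp ((Finset.sum_eq_zero_iff_of_nonneg hnn).mp h0' s (Finset.mem_univ s))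
    have hws : ∀ s, ∑ i, c i * M y i s = 0 := by
      intro s
      have := hw s
      simpa [Matrix.vecMul, dotProduct] using this
    have hall : ∀ u : E, ∑ i, c i * θ i y u = 0 := by
      intro u
      calc ∑ i, c i * θ i y u
          = ∑ i, ∑ s, b.repr u s * (c i * M y i s) := by
            refine Finset.sum_congr rfl fun i _ => ?_
            rw [expand y u (θ i y), Finset.mul_sum]
            exact Finset.sum_congr rfl fun s _ => by simp only [hM, Matrix.of_apply]; ring
        _ = ∑ s, ∑ i, b.repr u s * (c i * M y i s) := Finset.sum_comm
        _ = ∑ s, b.repr u s * ∑ i, c i * M y i s := by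
            exact Finset.sum_congr rfl fun s _ => (Finset.mul_sum _ _ _).symm
        _ = 0 := by simp [hws]
    obtain ⟨u, hu⟩ := hsurj y c
    have hsq : ∑ i, c i * c i = 0 := by
      have := hall u; simpa [hu] using this
    have hczero : c = 0 := by
      funext i
      have hnn : ∀ i ∈ Finset.univ, (0:ℝ) ≤ c i * c i := fun i _ => mul_self_nonneg _
      exact mul_self_eq_zero.mp ((Finset.sum_eq_zero_iff_of_nonneg hnn).mp hsq i (Finset.mem_univ i))
    exact hcne hczero
  -- inverse Gram matrix
  set Ginv : E → Matrix ι ι ℝ := fun y => ((G y).det)⁻¹ • (G y).adjugate with hGinvdef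
  have hmul : ∀ y, G y * Ginv y = 1 := by
    intro y
    rw [hGinvdef]
    rw [Matrix.mul_smul, Matrix.mul_adjugate, smul_smul, inv_mul_cancel₀ (hGdet y), one_smul]
  set d : E → ι → ℝ := fun y i => ∑ j, Ginv y i j * θ j y v with hd
  refine ⟨fun y => v - ∑ s, (∑ i, M y i s * d y i) • b s, ?_, ?_, ?_⟩
  · -- smoothness
    have hMc : ∀ i s, ContDiff ℝ (⊤:ℕ∞) fun y => M y i s := fun i s =>
      (hθ i).clm_apply contDiff_const
    have hGc : ∀ i j, ContDiff ℝ (⊤:ℕ∞) fun y => G y i j := by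
      intro i j
      have h : (fun y => G y i j) = fun y => ∑ s, M y i s * M y j s := funext fun y => hGapp y i j
      rw [h]
      exact ContDiff.sum fun s _ => (hMc i s).mul (hMc j s)
    have hdetc : ContDiff ℝ (⊤:ℕ∞) fun y => (G y).det := contDiff_det' hGc
    have hadjc : ∀ i j, ContDiff ℝ (⊤:ℕ∞) fun y => (G y).adjugate i j := by
      intro i j
      have h1 : (fun y => (G y).adjugate i j)
          = fun y => ((G y).updateRow j (Pi.single i 1)).det := by
        funext y; rw [Matrix.adjugate_apply]
      rw [h1]
      apply contDiff_det'
      intro i' j'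
      rcases eq_or_ne i' j with rfl | hne
      · simpa [Matrix.updateRow_apply] using (contDiff_const :
          ContDiff ℝ (⊤:ℕ∞) fun _ : E => (Pi.single i 1 : ι → ℝ) j')
      · simpa [Matrix.updateRow_apply, hne] using hGc i' j'
    have hGinvc : ∀ i j, ContDiff ℝ (⊤:ℕ∞) fun y => Ginv y i j := by
      intro i j
      have h : (fun y => Ginv y i j) = fun y => ((G y).det)⁻¹ * (G y).adjugate i j := by
        funext y; rw [hGinvdef]; simp [smul_eq_mul]
      rw [h]
      exact (hdetc.inv hGdet).mul (hadjc i j)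
    have hdc : ∀ i, ContDiff ℝ (⊤:ℕ∞) fun y => d y i := by
      intro i
      rw [hd]
      exact ContDiff.sum fun j _ => (hGinvc i j).mul ((hθ j).clm_apply contDiff_const)
    exact contDiff_const.sub (ContDiff.sum fun s _ =>
      (ContDiff.sum fun i _ => (hMc i s).mul (hdc i)).smul contDiff_const)
  · -- value at x
    have hdx : ∀ i, d x i = 0 := by
      intro i; rw [hd]; simp [hv]
    simp [hdx]
  · -- section property
    intro y j
    rw [map_sub, map_sum]
    have hterm : ∀ s, θ j y ((∑ i, M y i s * d y i) • b s) = (∑ i, M y i s * d y i) * M y j s := by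
      intro s; rw [ContinuousLinearMap.map_smul, smul_eq_mul]; simp only [hM, Matrix.of_apply]
    have h1 : ∑ s, θ j y ((∑ i, M y i s * d y i) • b s) = ∑ i, d y i * G y i j := by
      calc ∑ s, θ j y ((∑ i, M y i s * d y i) • b s)
          = ∑ s, ∑ i, d y i * (M y i s * M y j s) := by
            refine Finset.sum_congr rfl fun s _ => ?_
            rw [hterm s, Finset.sum_mul]
            exact Finset.sum_congr rfl fun i _ => by ring
        _ = ∑ i, ∑ s, d y i * (M y i s * M y j s) := Finset.sum_comm
        _ = ∑ i, d y i * G y i j := by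
            refine Finset.sum_congr rfl fun i _ => ?_
            rw [hGapp, Finset.mul_sum]
    have h2 : ∑ i, d y i * G y i j = θ j y v := by
      calc ∑ i, d y i * G y i j
          = ∑ i, ∑ m, θ m y v * (G y j i * Ginv y i m) := by
            refine Finset.sum_congr rfl fun i _ => ?_
            rw [hd, Finset.sum_mul]
            exact Finset.sum_congr rfl fun m _ => by rw [hGsym y i j]; ring
        _ = ∑ m, ∑ i, θ m y v * (G y j i * Ginv y i m) := Finset.sum_comm
        _ = ∑ m, θ m y v * (1 : Matrix ι ι ℝ) j m := by
            refine Finset.sum_congr rfl fun m _ => ?_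
            rw [← Finset.mul_sum]
            congr 1
            have hc := congrFun (congrFun (hmul y) j) m
            rw [← hc, Matrix.mul_apply]
        _ = θ j y v := by
            simp [Matrix.one_apply, mul_ite, mul_one, mul_zero]
    rw [h1, h2, sub_self]

lemma dOne_eq'' {η : E → (E →L[ℝ] ℝ)} {x : E} (hη : DifferentiableAt ℝ η x) (u v : E) :
    dOne η x u v = fderiv ℝ η x u v - fderiv ℝ η x v u := by
  have h1 : ∀ w : E, fderiv ℝ (fun y => η y w) x = (fderiv ℝ η x).flip w := by
    intro w
    have := fderiv_clm_apply (𝕜 := ℝ) hη (differentiableAt_const w)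
    simpa using this
  unfold dOne
  rw [h1 v, h1 u]
  rfl

lemma section_deriv' {η : E → (E →L[ℝ] ℝ)} {X : E → E} {x : E}
    (hη : DifferentiableAt ℝ η x) (hX : DifferentiableAt ℝ X x)
    (hsec : ∀ y, η y (X y) = 0) (u : E) :
    fderiv ℝ η x u (X x) = - η x (fderiv ℝ X x u) := by
  have h0 : fderiv ℝ (fun y => η y (X y)) x = 0 := by
    have he : (fun y => η y (X y)) = fun _ => (0:ℝ) := funext hsec
    rw [he]
    exact fderiv_const_apply 0
  have h1 := fderiv_clm_apply (𝕜 := ℝ) hη hX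
  rw [h0] at h1
  have h2 := congrFun (congrArg (DFunLike.coe) h1.symm) u
  simp only [ContinuousLinearMap.add_apply, ContinuousLinearMap.coe_comp',
    Function.comp_apply, ContinuousLinearMap.flip_apply, ContinuousLinearMap.zero_apply] at h2
  linarith

/-- The pointwise Cartan formula: for sections `X`, `Y` of `ker η` with
`η([X,Y]) = 0` at `x`, the 2-form `dη` vanishes on `(X x, Y x)`. -/
lemma cartan' {η : E → (E →L[ℝ] ℝ)} {X Y : E → E} {x : E}
    (hη : Differentiable ℝ η) (hX : Differentiable ℝ X) (hY : Differentiable ℝ Y)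
    (hsX : ∀ y, η y (X y) = 0) (hsY : ∀ y, η y (Y y) = 0)
    (hb : η x (fderiv ℝ Y x (X x) - fderiv ℝ X x (Y x)) = 0) :
    dOne η x (X x) (Y x) = 0 := by
  rw [dOne_eq'' (hη x)]
  have h1 := section_deriv' (hη x) (hY x) hsY (X x)
  have h2 := section_deriv' (hη x) (hX x) hsX (Y x)
  rw [map_sub] at hb
  linarith

end auxiliary

/-- on a `k`-cocontact manifold `(M, τ^α, η^α)`, the distribution
`D^S ∩ D^C` is maximally non-integrable. -/
theorem stmt_15 (E : Type*) [NormedAddCommGroup E] [NormedSpace ℝ E]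
    [FiniteDimensional ℝ E] (k : ℕ)
    (τ η : Fin k → E → (E →L[ℝ] ℝ))
    (hτ : ∀ α, ContDiff ℝ (⊤ : ℕ∞) (τ α))
    (hη : ∀ α, ContDiff ℝ (⊤ : ℕ∞) (η α))
    -- the τ^α are closed
    (hτclosed : ∀ (α : Fin k) (x u v : E), dOne (τ α) x u v = 0)
    -- (1) D^C is regular of corank k
    (h1 : ∀ x : E,
      Module.finrank ℝ ↥(⨅ α, LinearMap.ker (η α x : E →ₗ[ℝ] ℝ)) + k = Module.finrank ℝ E)
    -- (2) D^S is regular of corank k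
    (h2 : ∀ x : E,
      Module.finrank ℝ ↥(⨅ α, LinearMap.ker (τ α x : E →ₗ[ℝ] ℝ)) + k = Module.finrank ℝ E)
    -- (3) D^R is regular of rank 2k
    (h3 : ∀ x : E, ∃ S : Submodule ℝ E, (S : Set E) = ReebDist η x ∧
      Module.finrank ℝ ↥S = 2 * k)
    -- (4) D^C ∩ D^S has corank 2k, D^C ∩ D^R and D^S ∩ D^R have rank k
    (h4a : ∀ x : E,
      Module.finrank ℝ ↥((⨅ α, LinearMap.ker (η α x : E →ₗ[ℝ] ℝ)) ⊓ (⨅ α, LinearMap.ker (τ α x : E →ₗ[ℝ] ℝ)))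
        + 2 * k = Module.finrank ℝ E)
    (h4b : ∀ x : E, ∃ S : Submodule ℝ E,
      (S : Set E) = ((⨅ α, LinearMap.ker (η α x : E →ₗ[ℝ] ℝ) : Submodule ℝ E) : Set E) ∩ ReebDist η x ∧
      Module.finrank ℝ ↥S = k)
    (h4c : ∀ x : E, ∃ S : Submodule ℝ E,
      (S : Set E) = ((⨅ α, LinearMap.ker (τ α x : E →ₗ[ℝ] ℝ) : Submodule ℝ E) : Set E) ∩ ReebDist η x ∧
      Module.finrank ℝ ↥S = k)
    -- (5) D^C ∩ D^R ∩ D^S = {0}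
    (h5 : ∀ x : E,
      ((⨅ α, LinearMap.ker (η α x : E →ₗ[ℝ] ℝ) : Submodule ℝ E) : Set E)
        ∩ ((⨅ α, LinearMap.ker (τ α x : E →ₗ[ℝ] ℝ) : Submodule ℝ E) : Set E)
        ∩ ReebDist η x = {(0 : E)}) :
    ∀ X : E → E, ContDiff ℝ (⊤ : ℕ∞) X →
      (∀ (x : E) (α : Fin k), η α x (X x) = 0 ∧ τ α x (X x) = 0) →
      (∀ Y : E → E, ContDiff ℝ (⊤ : ℕ∞) Y →
        (∀ (x : E) (α : Fin k), η α x (Y x) = 0 ∧ τ α x (Y x) = 0) →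
        (∀ (x : E) (α : Fin k),
          η α x (fderiv ℝ Y x (X x) - fderiv ℝ X x (Y x)) = 0 ∧
          τ α x (fderiv ℝ Y x (X x) - fderiv ℝ X x (Y x)) = 0)) →
      X = 0 := by
  classical
  intro X hXsm hXsec hbrk
  set θ : (Fin k ⊕ Fin k) → E → (E →L[ℝ] ℝ) := Sum.elim η τ with hθdef
  have hθ : ∀ i, ContDiff ℝ (⊤ : ℕ∞) (θ i) := by
    rintro (α | α)
    · exact hη α
    · exact hτ α
  -- surjectivity of the combined forms at every point
  have hsurj : ∀ (y : E) (c : Fin k ⊕ Fin k → ℝ), ∃ v : E, ∀ i, θ i y v = c i := by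
    intro y c
    set P : E →ₗ[ℝ] (Fin k ⊕ Fin k → ℝ) :=
      LinearMap.pi (fun i => (θ i y : E →ₗ[ℝ] ℝ)) with hP
    have hkerP : LinearMap.ker P
        = (⨅ α, LinearMap.ker (η α y : E →ₗ[ℝ] ℝ)) ⊓ (⨅ α, LinearMap.ker (τ α y : E →ₗ[ℝ] ℝ)) := by
      rw [hP, LinearMap.ker_pi, iInf_sum]
      rfl
    have hrank := LinearMap.finrank_range_add_finrank_ker P
    rw [hkerP] at hrank
    have hcard : Module.finrank ℝ (Fin k ⊕ Fin k → ℝ) = 2 * k := by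
      simp [Module.finrank_pi]
      omega
    have hr : Module.finrank ℝ (LinearMap.range P) = Module.finrank ℝ (Fin k ⊕ Fin k → ℝ) := by
      have := h4a y
      omega
    have htop : LinearMap.range P = ⊤ := Submodule.eq_top_of_finrank_eq hr
    obtain ⟨v, hv⟩ := LinearMap.range_eq_top.mp htop c
    exact ⟨v, fun i => congrFun hv i⟩
  funext x
  show X x = 0
  -- X x lies in the Reeb distribution
  have hXreeb : X x ∈ ReebDist η x := by
    obtain ⟨R, hRset, hRrank⟩ := h3 x
    set K := (⨅ α, LinearMap.ker (η α x : E →ₗ[ℝ] ℝ)) ⊓ (⨅ α, LinearMap.ker (τ α x : E →ₗ[ℝ] ℝ)) with hK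
    have hKR : K ⊓ R = ⊥ := by
      rw [eq_bot_iff]
      intro z hz
      have hzmem : z ∈ ({(0:E)} : Set E) := by
        rw [← h5 x]
        refine ⟨⟨?_, ?_⟩, ?_⟩
        · exact hz.1.1
        · exact hz.1.2
        · rw [← hRset]; exact hz.2
      simpa using hzmem
    have hsum : K ⊔ R = ⊤ := by
      apply Submodule.eq_top_of_finrank_eq
      have hh := Submodule.finrank_sup_add_finrank_inf_eq K R
      rw [hKR] at hh
      simp only [finrank_bot, add_zero] at hh
      have h4 := h4a x
      rw [← hK] at h4
      omega
    intro α w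
    have hηd : Differentiable ℝ (η α) := (hη α).differentiable (by simp)
    have hw : w ∈ K ⊔ R := hsum ▸ Submodule.mem_top
    obtain ⟨a, haK, bb, hbR, rfl⟩ := Submodule.mem_sup.mp hw
    have ha0 : ∀ i, θ i x a = 0 := by
      rintro (β | β)
      · exact (Submodule.mem_iInf _).mp haK.1 β
      · exact (Submodule.mem_iInf _).mp haK.2 β
    -- extend `a` to a global smooth section `Y` of `D^S ∩ D^C`
    obtain ⟨Y, hYsm, hYx, hYsec⟩ := exists_section' θ hθ hsurj x a ha0
    have hYsec' : ∀ (y : E) (β : Fin k), η β y (Y y) = 0 ∧ τ β y (Y y) = 0 :=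
      fun y β => ⟨hYsec y (Sum.inl β), hYsec y (Sum.inr β)⟩
    have hbrkα := (hbrk Y hYsm hYsec' x α).1
    have e1 : dOne (η α) x (X x) a = 0 := by
      rw [← hYx]
      exact cartan' hηd (hXsm.differentiable (by simp))
        (hYsm.differentiable (by simp))
        (fun y => (hXsec y α).1) (fun y => (hYsec' y α).1) hbrkα
    have e2 : dOne (η α) x bb (X x) = 0 := by
      have hbb : bb ∈ ReebDist η x := by rw [← hRset]; exact hbR
      exact hbb α (X x)
    rw [dOne_eq'' (hηd x)] at e1 e2 ⊢
    simp only [map_add, ContinuousLinearMap.add_apply]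
    linarith
  have hXmem : X x ∈ ({(0:E)} : Set E) := by
    rw [← h5 x]
    refine ⟨⟨?_, ?_⟩, hXreeb⟩
    · exact (Submodule.mem_iInf _).mpr fun β => (hXsec x β).1
    · exact (Submodule.mem_iInf _).mpr fun β => (hXsec x β).2
  simpa using hXmem
end

section
/- On ℝ⁷ with global coordinates (x, y, q, pˣ, pʸ, sˣ, sʸ), consider ω = dx ∧ dy and Θ = (dsˣ − pˣ dq) ∧ dy − (dsʸ − pʸ dq) ∧ dx + dpˣ ∧ dq. Then ker Θ = span(∂/∂pʸ) (as a distribution of vector fields annihilating Θ by contraction), and in particular ker Θ is an integrable (hence not maximally non-integrable) distribution of rank 1. -/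
/-!
Pairing `v` with the coordinate vectors `∂sˣ, ∂sʸ, ∂pˣ, ∂q, ∂y, ∂x` (in this order) forces the
components `y, x, q, pˣ, sˣ, sʸ` of a kernel vector to vanish one after another, while `dpʸ` does
not occur in `Θ` at all. So `ker Θ` is the constant subspace `span ∂pʸ`; a derivative of a vector
field with values in a fixed subspace stays in it, hence so does the Lie bracket `DY·X − DX·Y`.
-/

/-- `ℝ⁷` with coordinates indexed `0:x, 1:y, 2:q, 3:pˣ, 4:pʸ, 5:sˣ, 6:sʸ`. -/
abbrev V7 := Fin 7 → ℝ

/-- The 2-form `Θ = (dsˣ − pˣ dq) ∧ dy − (dsʸ − pʸ dq) ∧ dx + dpˣ ∧ dq` at the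
point `m`, evaluated on the pair of tangent vectors `(u, v)`. -/
def Theta7 (m u v : V7) : ℝ :=
  ((u 5 - m 3 * u 2) * v 1 - (v 5 - m 3 * v 2) * u 1)
  - ((u 6 - m 4 * u 2) * v 0 - (v 6 - m 4 * v 2) * u 0)
  + (u 3 * v 2 - v 3 * u 2)

theorem Submodule.mem_span_pi_single_one_iff {ι R : Type*} [DecidableEq ι] [Semiring R]
    (i : ι) (v : ι → R) : v ∈ Submodule.span R {Pi.single i 1} ↔ ∀ j ≠ i, v j = 0 := by
  rw [Submodule.mem_span_singleton]
  constructor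
  · rintro ⟨a, rfl⟩ j hj
    simp [hj]
  · intro h
    refine ⟨v i, funext fun j => ?_⟩
    by_cases hj : j = i
    · subst hj
      simp
    · simp [hj, h j hj]

theorem fderiv_apply_eq_zero_of_forall_apply_eq_zero {𝕜 E ι : Type*} [NontriviallyNormedField 𝕜]
    [NormedAddCommGroup E] [NormedSpace 𝕜 E] [Fintype ι] {Z : E → ι → 𝕜} {m : E}
    (hZ : DifferentiableAt 𝕜 Z m) {i : ι} (h : ∀ x, Z x i = 0) (u : E) :
    fderiv 𝕜 Z m u i = 0 := by
  have hcomp := hasFDerivAt_pi'.1 hZ.hasFDerivAt i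
  rw [show (fun x => Z x i) = fun _ => 0 from funext h] at hcomp
  exact congrArg (· u) (hcomp.unique (hasFDerivAt_const 0 m))

theorem forall_theta7_eq_zero_iff (m v : V7) : (∀ w, Theta7 m v w = 0) ↔ ∀ i ≠ 4, v i = 0 := by
  constructor
  · intro h
    have h0 := h (Pi.single 0 1)
    have h1 := h (Pi.single 1 1)
    have h2 := h (Pi.single 2 1)
    have h3 := h (Pi.single 3 1)
    have h5 := h (Pi.single 5 1)
    have h6 := h (Pi.single 6 1)
    simp only [Theta7, ne_eq, Fin.reduceEq, not_false_eq_true, Pi.single_eq_same,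
      Pi.single_eq_of_ne] at h0 h1 h2 h3 h5 h6
    intro i hi
    fin_cases i <;> simp_all
  · intro h w
    simp [Theta7, h 0 (by decide), h 1 (by decide), h 2 (by decide), h 3 (by decide),
      h 5 (by decide), h 6 (by decide)]

/-- `ker Θ = ⟨∂/∂pʸ⟩` at every point; this kernel distribution has
rank 1 and is integrable (closed under Lie brackets of its sections). -/
theorem stmt_16 :
    (∀ m : V7, {v : V7 | ∀ w : V7, Theta7 m v w = 0}
        = (Submodule.span ℝ {Pi.single (4 : Fin 7) (1:ℝ)} : Submodule ℝ V7)) ∧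
    Module.finrank ℝ ↥(Submodule.span ℝ ({Pi.single (4 : Fin 7) (1:ℝ)} : Set V7)) = 1 ∧
    (∀ X Y : V7 → V7, Differentiable ℝ X → Differentiable ℝ Y →
      (∀ (m w : V7), Theta7 m (X m) w = 0) →
      (∀ (m w : V7), Theta7 m (Y m) w = 0) →
      ∀ (m w : V7), Theta7 m (fderiv ℝ Y m (X m) - fderiv ℝ X m (Y m)) w = 0) := by
  refine ⟨fun m => Set.ext fun v => (forall_theta7_eq_zero_iff m v).trans
      (Submodule.mem_span_pi_single_one_iff 4 v).symm,
    finrank_span_singleton (by simp), ?_⟩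
  intro X Y hX hY hXker hYker m
  refine (forall_theta7_eq_zero_iff m _).2 fun i hi => ?_
  have hXi : ∀ x, X x i = 0 := fun x => (forall_theta7_eq_zero_iff x (X x)).1 (hXker x) i hi
  have hYi : ∀ x, Y x i = 0 := fun x => (forall_theta7_eq_zero_iff x (Y x)).1 (hYker x) i hi
  simp [fderiv_apply_eq_zero_of_forall_apply_eq_zero (hX m) hXi,
    fderiv_apply_eq_zero_of_forall_apply_eq_zero (hY m) hYi]
end

section
/- Let H be a smooth function on ℝᵏ × ℝⁿ × ℝ^{nk} × ℝᵏ with coordinates (x^α, yᵃ, p^α_a, s^α), and let Θ_H = −p^α_a dyᵃ ∧ d^{k−1}x_α + H dᵏx + ds^α ∧ d^{k−1}x_α. Then the dissipation form σ_H = (∂H/∂s^α) dx^α satisfies σ_H ∧ ι_{R_μ}Θ_H = ι_{R_μ}dΘ_H for the Reeb vector fields R_μ = ∂/∂s^μ, and moreover ι_{R_μ}Θ_H = d^{k−1}x_μ. -/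
/-- The restricted multimomentum phase space `P* ≅ ℝᵏ × ⊕ᵏT*Q × ℝᵏ` (`k = K+1`)
in coordinates `(x^α, yᵃ, p^α_a, s^α)`; this type also serves as tangent space. -/
abbrev MH (K n : ℕ) :=
  (Fin (K+1) → ℝ) × (Fin n → ℝ) × (Fin (K+1) → Fin n → ℝ) × (Fin (K+1) → ℝ)

/-- `dᵏx` evaluated on the columns `c` of `x`-components. -/
def detxH (K : ℕ) (c : Fin (K+1) → Fin (K+1) → ℝ) : ℝ :=
  (Matrix.of fun i j => c j i).det

/-- `d^{k−1}x_α = ι_{∂/∂x^α} dᵏx` evaluated on `K` tangent vectors. -/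
def dKxaH (K n : ℕ) (α : Fin (K+1)) (w : Fin K → MH K n) : ℝ :=
  detxH K (Fin.cons (Pi.single α (1:ℝ)) (fun l => (w l).1))

/-- The wedge `β ∧ d^{k−1}x_α` of a 1-form `β` with `d^{k−1}x_α`. -/
def wedge1H (K n : ℕ) (β : MH K n → ℝ) (α : Fin (K+1)) (v : Fin (K+1) → MH K n) : ℝ :=
  ∑ i : Fin (K+1),
    (-1 : ℝ)^(i : ℕ) * β (v i) * dKxaH K n α (fun j => v (i.succAbove j))

/-- The Hamiltonian multicontact form
`Θ_H = −p^α_a dyᵃ ∧ d^{k−1}x_α + H dᵏx + ds^α ∧ d^{k−1}x_α` at `m`. -/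
def ThetaH (K n : ℕ) (H : MH K n → ℝ) (m : MH K n) (v : Fin (K+1) → MH K n) : ℝ :=
  -(∑ α, ∑ a, m.2.2.1 α a * wedge1H K n (fun u => u.2.1 a) α v)
    + H m * detxH K (fun j => (v j).1)
    + ∑ α, wedge1H K n (fun u => u.2.2.2 α) α v

/-- The Reeb vector `R_μ = ∂/∂s^μ`. -/
def svecH (K n : ℕ) (μ : Fin (K+1)) : MH K n := (0, 0, 0, Pi.single μ (1:ℝ))

/-- The exterior derivative `dΘ_H` evaluated at `m` on `k+1` tangent vectors. -/
noncomputable def dThetaH (K n : ℕ) (H : MH K n → ℝ) (m : MH K n)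
    (u : Fin (K+2) → MH K n) : ℝ :=
  ∑ i : Fin (K+2),
    (-1 : ℝ)^(i : ℕ) *
      fderiv ℝ (fun m' => ThetaH K n H m' (fun l => u (i.succAbove l))) m (u i)

/-- The dissipation form `σ_H = (∂H/∂s^α) dx^α` at `m` on `u`. -/
noncomputable def sigmaH (K n : ℕ) (H : MH K n → ℝ) (m u : MH K n) : ℝ :=
  ∑ α, fderiv ℝ H m (svecH K n α) * u.1 α

lemma detx_zero_col (K : ℕ) (c : Fin (K+1) → Fin (K+1) → ℝ) (j : Fin (K+1))
    (h : c j = 0) : detxH K c = 0 := by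
  apply Matrix.det_eq_zero_of_column_eq_zero j
  intro i
  simp [Matrix.of_apply, h]

lemma dKxa_zero (K n : ℕ) (α : Fin (K+1)) (w : Fin K → MH K n) (l : Fin K)
    (h : (w l).1 = 0) : dKxaH K n α w = 0 := by
  apply detx_zero_col K _ l.succ
  simp [h]

lemma succAbove_zero' (K : ℕ) (i' : Fin K) :
    (Fin.succ i').succAbove ⟨0, i'.pos⟩ = (0 : Fin (K+1)) := by
  rw [Fin.succAbove_of_castSucc_lt]
  · ext; simp
  · simp [Fin.lt_def]

lemma wedge_cons (K n : ℕ) (β : MH K n → ℝ) (α μ : Fin (K+1)) (w : Fin K → MH K n) :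
    wedge1H K n β α (Fin.cons (svecH K n μ) w) = β (svecH K n μ) * dKxaH K n α w := by
  unfold wedge1H
  rw [Fin.sum_univ_succ]
  have h0 : ∀ j : Fin K, (Fin.cons (svecH K n μ) w : Fin (K+1) → MH K n)
      ((0 : Fin (K+1)).succAbove j) = w j := by
    intro j; rw [Fin.succAbove_zero]; exact Fin.cons_succ _ _ _
  have hrest : ∀ i' : Fin K,
      (-1 : ℝ)^((Fin.succ i' : Fin (K+1)) : ℕ) *
        β ((Fin.cons (svecH K n μ) w : Fin (K+1) → MH K n) (Fin.succ i')) *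
        dKxaH K n α (fun j => (Fin.cons (svecH K n μ) w : Fin (K+1) → MH K n)
          ((Fin.succ i').succAbove j)) = 0 := by
    intro i'
    have : dKxaH K n α (fun j => (Fin.cons (svecH K n μ) w : Fin (K+1) → MH K n)
        ((Fin.succ i').succAbove j)) = 0 := by
      apply dKxa_zero K n α _ ⟨0, i'.pos⟩
      rw [succAbove_zero' K i', Fin.cons_zero]
      rfl
    rw [this, mul_zero]
  rw [Finset.sum_eq_zero (fun i' _ => hrest i'), add_zero]
  have he : (fun j => (Fin.cons (svecH K n μ) w : Fin (K+1) → MH K n)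
      ((0 : Fin (K+1)).succAbove j)) = w := funext h0
  rw [he]
  simp

lemma theta_cons (K n : ℕ) (H : MH K n → ℝ) (μ : Fin (K+1)) (m : MH K n)
    (w : Fin K → MH K n) :
    ThetaH K n H m (Fin.cons (svecH K n μ) w) = dKxaH K n μ w := by
  unfold ThetaH
  have h1 : detxH K (fun j => ((Fin.cons (svecH K n μ) w : Fin (K+1) → MH K n) j).1) = 0 := by
    apply detx_zero_col K _ 0
    rw [Fin.cons_zero]; rfl
  rw [h1, mul_zero]
  simp only [wedge_cons]
  have h2 : ∀ a : Fin n, (svecH K n μ).2.1 a = 0 := fun a => rfl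
  simp only [h2, zero_mul, mul_zero, Finset.sum_const_zero, neg_zero, zero_add, add_zero]
  have h3 : ∀ α : Fin (K+1), (svecH K n μ).2.2.2 α = if α = μ then (1:ℝ) else 0 := by
    intro α
    simp [svecH, Pi.single_apply]
  simp only [h3, ite_mul, one_mul, zero_mul]
  simp

lemma dKxa_expand (K : ℕ) (μ : Fin (K+1)) (c : Fin K → Fin (K+1) → ℝ) :
    detxH K (Fin.cons (Pi.single μ (1:ℝ)) c)
      = (-1:ℝ)^(μ:ℕ) * (Matrix.of fun r l => c l (μ.succAbove r)).det := by
  unfold detxH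
  rw [Matrix.det_succ_column_zero]
  rw [Fintype.sum_eq_single μ]
  · have hA0 : (Matrix.of fun i j => (Fin.cons (Pi.single μ (1:ℝ)) c : Fin (K+1) → Fin (K+1) → ℝ) j i) μ 0 = 1 := by
      simp [Matrix.of_apply]
    rw [hA0, mul_one]
    have hsub : (Matrix.of fun i j => (Fin.cons (Pi.single μ (1:ℝ)) c : Fin (K+1) → Fin (K+1) → ℝ) j i).submatrix μ.succAbove Fin.succ
        = Matrix.of fun r l => c l (μ.succAbove r) := by
      ext r l
      simp [Matrix.submatrix_apply, Matrix.of_apply]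
    rw [hsub]
  · intro i hi
    have : (Matrix.of fun i j => (Fin.cons (Pi.single μ (1:ℝ)) c : Fin (K+1) → Fin (K+1) → ℝ) j i) i 0
        = 0 := by
      simp [Matrix.of_apply, Pi.single_apply, hi]
    rw [this, mul_zero, zero_mul]

lemma keydet (K : ℕ) (μ α : Fin (K+1)) (X : Fin (K+1) → Fin (K+1) → ℝ) :
    ∑ i : Fin (K+1), (-1:ℝ)^(i:ℕ) * X i α *
        detxH K (Fin.cons (Pi.single μ (1:ℝ)) (fun l => X (i.succAbove l)))
      = (if α = μ then (1:ℝ) else 0) * detxH K X := by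
  have hA' : ∀ i : Fin (K+1),
      detxH K (Fin.cons (Pi.single μ (1:ℝ)) (fun l => X (i.succAbove l)))
        = (-1:ℝ)^(μ:ℕ) * (Matrix.of fun r l => X (i.succAbove l) (μ.succAbove r)).det :=
    fun i => dKxa_expand K μ _
  set A' : Matrix (Fin (K+1)) (Fin (K+1)) ℝ :=
    Matrix.of fun r c => if r = μ then X c α else X c r with hA
  have hexp : A'.det = ∑ j : Fin (K+1),
      (-1:ℝ)^((μ:ℕ)+(j:ℕ)) * X j α * (Matrix.of fun r l => X (j.succAbove l) (μ.succAbove r)).det := by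
    rw [Matrix.det_succ_row A' μ]
    refine Finset.sum_congr rfl fun j _ => ?_
    congr 1
    · congr 1
      simp [hA, Matrix.of_apply]
    · congr 1
      ext r l
      simp [hA, Matrix.submatrix, Matrix.of_apply, Fin.succAbove_ne μ r]
  have hlhs : ∑ i : Fin (K+1), (-1:ℝ)^(i:ℕ) * X i α *
        detxH K (Fin.cons (Pi.single μ (1:ℝ)) (fun l => X (i.succAbove l))) = A'.det := by
    rw [hexp]
    refine Finset.sum_congr rfl fun i _ => ?_
    rw [hA' i, pow_add]
    ring
  rw [hlhs]
  by_cases h : α = μ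
  · subst h
    rw [if_pos rfl, one_mul]
    unfold detxH
    congr 1
    ext r c
    simp [hA, Matrix.of_apply]
    intro h; rw [h]
  · rw [if_neg h, zero_mul]
    apply Matrix.det_zero_of_row_eq (Ne.symm h)
    funext c
    simp [hA, Matrix.of_apply, Ne.symm h]

noncomputable def pcoordH (K n : ℕ) (α : Fin (K+1)) (a : Fin n) : MH K n →L[ℝ] ℝ :=
  (ContinuousLinearMap.proj a).comp ((ContinuousLinearMap.proj α).comp
    ((ContinuousLinearMap.fst ℝ (Fin (K+1) → Fin n → ℝ) (Fin (K+1) → ℝ)).comp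
      ((ContinuousLinearMap.snd ℝ (Fin n → ℝ)
          ((Fin (K+1) → Fin n → ℝ) × (Fin (K+1) → ℝ))).comp
        (ContinuousLinearMap.snd ℝ (Fin (K+1) → ℝ)
          ((Fin n → ℝ) × (Fin (K+1) → Fin n → ℝ) × (Fin (K+1) → ℝ))))))

lemma pcoordH_apply (K n : ℕ) (α : Fin (K+1)) (a : Fin n) (m : MH K n) :
    pcoordH K n α a m = m.2.2.1 α a := rfl

lemma hasFDeriv_theta (K n : ℕ) (H : MH K n → ℝ) (hH : ContDiff ℝ (⊤ : ℕ∞) H)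
    (m : MH K n) (v : Fin (K+1) → MH K n) :
    HasFDerivAt (fun m' => ThetaH K n H m' v)
      (-(∑ α, ∑ a, wedge1H K n (fun u => u.2.1 a) α v • pcoordH K n α a)
        + detxH K (fun j => (v j).1) • fderiv ℝ H m) m := by
  have h1 : HasFDerivAt (fun m' : MH K n =>
        ∑ α, ∑ a, m'.2.2.1 α a * wedge1H K n (fun u => u.2.1 a) α v)
      (∑ α, ∑ a, wedge1H K n (fun u => u.2.1 a) α v • pcoordH K n α a) m := by
    apply HasFDerivAt.fun_sum
    intro α _
    apply HasFDerivAt.fun_sum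
    intro a _
    exact (pcoordH K n α a).hasFDerivAt.mul_const _
  have h2 : HasFDerivAt H (fderiv ℝ H m) m :=
    ((hH.differentiable (by norm_num)) m).hasFDerivAt
  exact (h1.neg.add (h2.mul_const _)).add_const _

/-- for the Reeb vector fields `R_μ = ∂/∂s^μ`, one has
`ι_{R_μ}Θ_H = d^{k−1}x_μ` and `σ_H ∧ ι_{R_μ}Θ_H = ι_{R_μ}dΘ_H`. -/
theorem stmt_19 (K n : ℕ) (H : MH K n → ℝ) (hH : ContDiff ℝ (⊤ : ℕ∞) H) :
    (∀ (μ : Fin (K+1)) (m : MH K n) (w : Fin K → MH K n),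
      ThetaH K n H m (Fin.cons (svecH K n μ) w) = dKxaH K n μ w)
    ∧
    (∀ (μ : Fin (K+1)) (m : MH K n) (v : Fin (K+1) → MH K n),
      (∑ i : Fin (K+1),
        (-1 : ℝ)^(i : ℕ) * sigmaH K n H m (v i) *
          ThetaH K n H m (Fin.cons (svecH K n μ) (fun j => v (i.succAbove j))))
        = dThetaH K n H m (Fin.cons (svecH K n μ) v)) := by
  constructor
  · intro μ m w
    exact theta_cons K n H μ m w
  · intro μ m v
    set c : Fin (K+1) → ℝ := fun α => fderiv ℝ H m (svecH K n α) with hc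
    set D : ℝ := detxH K (fun j => (v j).1) with hD
    have hL : (∑ i : Fin (K+1),
        (-1 : ℝ)^(i : ℕ) * sigmaH K n H m (v i) *
          ThetaH K n H m (Fin.cons (svecH K n μ) (fun j => v (i.succAbove j))))
        = c μ * D := by
      calc (∑ i : Fin (K+1),
            (-1 : ℝ)^(i : ℕ) * sigmaH K n H m (v i) *
              ThetaH K n H m (Fin.cons (svecH K n μ) (fun j => v (i.succAbove j))))
          = ∑ i : Fin (K+1), ∑ α, c α * ((-1:ℝ)^(i:ℕ) * (v i).1 α *
              detxH K (Fin.cons (Pi.single μ (1:ℝ))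
                (fun l => (fun j => (v j).1) (i.succAbove l)))) := by
            refine Finset.sum_congr rfl fun i _ => ?_
            rw [theta_cons, sigmaH]
            rw [Finset.mul_sum, Finset.sum_mul]
            refine Finset.sum_congr rfl fun α _ => ?_
            have : dKxaH K n μ (fun j => v (i.succAbove j))
                = detxH K (Fin.cons (Pi.single μ (1:ℝ))
                    (fun l => (fun j => (v j).1) (i.succAbove l))) := rfl
            rw [this]; ring
        _ = ∑ α, c α * ∑ i : Fin (K+1), ((-1:ℝ)^(i:ℕ) * (v i).1 α *
              detxH K (Fin.cons (Pi.single μ (1:ℝ))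
                (fun l => (fun j => (v j).1) (i.succAbove l)))) := by
            rw [Finset.sum_comm]
            exact Finset.sum_congr rfl fun α _ => (Finset.mul_sum _ _ _).symm
        _ = ∑ α, c α * ((if α = μ then (1:ℝ) else 0) * D) := by
            refine Finset.sum_congr rfl fun α _ => ?_
            rw [keydet K μ α (fun j => (v j).1)]
        _ = c μ * D := by
            simp [mul_ite, mul_zero, mul_one, Finset.sum_ite_eq']
    rw [hL]
    unfold dThetaH
    rw [Fin.sum_univ_succ]
    have hfam0 : (fun l => (Fin.cons (svecH K n μ) v : Fin (K+2) → MH K n)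
        ((0 : Fin (K+2)).succAbove l)) = v := by
      funext l; rw [Fin.succAbove_zero]; exact Fin.cons_succ _ _ _
    have hsucc : ∀ j : Fin (K+1),
        (-1:ℝ)^((Fin.succ j : Fin (K+2)) : ℕ) *
        fderiv ℝ (fun m' => ThetaH K n H m' (fun l =>
            (Fin.cons (svecH K n μ) v : Fin (K+2) → MH K n) ((Fin.succ j).succAbove l))) m
          ((Fin.cons (svecH K n μ) v : Fin (K+2) → MH K n) (Fin.succ j)) = 0 := by
      intro j
      have hf : (fun l : Fin (K+1) => (Fin.cons (svecH K n μ) v : Fin (K+2) → MH K n)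
          ((Fin.succ j).succAbove l))
          = Fin.cons (svecH K n μ) (fun l' => v (j.succAbove l')) := by
        funext l
        refine Fin.cases ?_ (fun l' => ?_) l
        · rw [Fin.succ_succAbove_zero, Fin.cons_zero, Fin.cons_zero]
        · rw [Fin.succ_succAbove_succ, Fin.cons_succ, Fin.cons_succ]
      have hconst : (fun m' => ThetaH K n H m' (fun l =>
          (Fin.cons (svecH K n μ) v : Fin (K+2) → MH K n) ((Fin.succ j).succAbove l)))
          = fun _ => dKxaH K n μ (fun l' => v (j.succAbove l')) := by
        funext m'
        rw [hf]
        exact theta_cons K n H μ m' _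
      rw [hconst, fderiv_fun_const]
      simp
    rw [Finset.sum_eq_zero (fun j _ => hsucc j), add_zero]
    rw [hfam0, Fin.cons_zero]
    rw [(hasFDeriv_theta K n H hH m v).fderiv]
    simp only [ContinuousLinearMap.add_apply, ContinuousLinearMap.neg_apply,
      ContinuousLinearMap.coe_sum', Finset.sum_apply, ContinuousLinearMap.smul_apply,
      pcoordH_apply, smul_eq_mul]
    have hz : ∀ (α : Fin (K+1)) (a : Fin n), (svecH K n μ).2.2.1 α a = 0 := fun _ _ => rfl
    simp only [hz, mul_zero, Finset.sum_const_zero, neg_zero, zero_add]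
    simp only [Fin.val_zero, pow_zero, one_mul, ← hc, ← hD]
    ring
end
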